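/- arXiv:2305.08104 — 3 statements merged into one kernel-verified Lean document; each statement's English description precedes it below -/
import Mathlib

section
/- For every θ ∈ ℝ^m, the steady-state TD direction satisfies ⟨θ* − θ, ḡ(θ)⟩ ≥ ω(1−γ)·‖θ* − θ‖₂². -/
/-!
Write `u = θ* - θ` and `x s = ⟪φ s, u⟫`. Since `ḡ` is affine and `ḡ θ* = 0`,
`⟪u, ḡ θ⟫ = 𝔼[(x s - γ x s') x s]` with `s ∼ π`, `s' ∼ P(s, ·)`. By AM-GM and stationarity of `π`,
`𝔼[x s x s'] ≤ (𝔼[x s²] + 𝔼[x s'²]) / 2 = 𝔼[x s²]`, so `⟪u, ḡ θ⟫ ≥ (1 - γ) 𝔼[x s²]`, and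
`𝔼[x s²] = uᵀ Σ u ≥ ω ‖u‖²`.
-/

open MeasureTheory ProbabilityTheory Finset
open scoped RealInnerProductSpace ProbabilityTheory

noncomputable section

/-- The TD update direction `g(θ, o)` for an observation tuple `o = (s, r, s')`:
`g(θ, o) = (r + γ⟪φ s', θ⟫ - ⟪φ s, θ⟫) • φ s`. -/
def tdDir {S : Type*} {m : ℕ} (γ : ℝ) (φ : S → EuclideanSpace ℝ (Fin m))
    (θ : EuclideanSpace ℝ (Fin m)) (o : S × ℝ × S) : EuclideanSpace ℝ (Fin m) :=
  (o.2.1 + γ * ⟪φ o.2.2, θ⟫ - ⟪φ o.1, θ⟫) • φ o.1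

/-- The steady-state TD direction `ḡ(θ) = ∑ s, π s • ∑ s', P s s' • g(θ, (s, R s, s'))`. -/
def tdBar {S : Type*} [Fintype S] {m : ℕ} (γ : ℝ) (φ : S → EuclideanSpace ℝ (Fin m))
    (P : S → S → ℝ) (pidist : S → ℝ) (R : S → ℝ) (θ : EuclideanSpace ℝ (Fin m)) :
    EuclideanSpace ℝ (Fin m) :=
  ∑ st : S, ∑ st' : S, (pidist st * P st st') • tdDir γ φ θ (st, R st, st')

section MarkovChain

variable {S : Type*} [Fintype S] (P : S → S → ℝ) (pidist : S → ℝ)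

theorem sum_sum_mul_eq_of_sum_eq_one (hP1 : ∀ s, ∑ s', P s s' = 1) (f : S → ℝ) :
    ∑ s, ∑ s', pidist s * P s s' * f s = ∑ s, pidist s * f s := by
  refine Finset.sum_congr rfl fun s _ => ?_
  rw [← Finset.sum_mul, ← Finset.mul_sum, hP1 s, mul_one]

theorem sum_sum_mul_eq_of_stationary (hstat : ∀ s', ∑ s, pidist s * P s s' = pidist s')
    (f : S → ℝ) :
    ∑ s, ∑ s', pidist s * P s s' * f s' = ∑ s, pidist s * f s := by
  rw [Finset.sum_comm]
  refine Finset.sum_congr rfl fun s' _ => ?_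
  rw [← Finset.sum_mul, hstat s']

theorem sum_sum_mul_mul_le_of_stationary (hP0 : ∀ s s', 0 ≤ P s s')
    (hpi0 : ∀ s, 0 ≤ pidist s) (hP1 : ∀ s, ∑ s', P s s' = 1)
    (hstat : ∀ s', ∑ s, pidist s * P s s' = pidist s') (x : S → ℝ) :
    ∑ s, ∑ s', pidist s * P s s' * (x s * x s') ≤ ∑ s, pidist s * x s ^ 2 :=
  calc ∑ s, ∑ s', pidist s * P s s' * (x s * x s')
      ≤ ∑ s, ∑ s', pidist s * P s s' * ((x s ^ 2 + x s' ^ 2) / 2) := by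
        gcongr with s _ s' _
        · exact mul_nonneg (hpi0 s) (hP0 s s')
        · nlinarith [sq_nonneg (x s - x s')]
    _ = ((∑ s, ∑ s', pidist s * P s s' * x s ^ 2)
          + ∑ s, ∑ s', pidist s * P s s' * x s' ^ 2) / 2 := by
        simp only [← Finset.sum_add_distrib, Finset.sum_div]
        exact Finset.sum_congr rfl fun _ _ => Finset.sum_congr rfl fun _ _ => by ring
    _ = ∑ s, pidist s * x s ^ 2 := by
        rw [sum_sum_mul_eq_of_sum_eq_one P pidist hP1, sum_sum_mul_eq_of_stationary P pidist hstat]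
        ring

end MarkovChain

section TemporalDifference

variable {S : Type*} [Fintype S] {m : ℕ} (γ : ℝ) (φ : S → EuclideanSpace ℝ (Fin m))
  (P : S → S → ℝ) (pidist : S → ℝ) (R : S → ℝ)

theorem inner_tdBar_sub_tdBar (θ θ' : EuclideanSpace ℝ (Fin m)) :
    ⟪θ' - θ, tdBar γ φ P pidist R θ - tdBar γ φ P pidist R θ'⟫ =
      ∑ s, ∑ s', pidist s * P s s' *
        ((⟪φ s, θ' - θ⟫ - γ * ⟪φ s', θ' - θ⟫) * ⟪φ s, θ' - θ⟫) := by
  simp only [tdBar, tdDir, ← Finset.sum_sub_distrib, inner_sum, ← smul_sub,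
    real_inner_smul_right, inner_sub_right, real_inner_comm (φ _)]
  exact Finset.sum_congr rfl fun _ _ => Finset.sum_congr rfl fun _ _ => by ring

theorem one_sub_mul_sum_sq_le_inner_tdBar_sub (hγ : 0 ≤ γ) (hP0 : ∀ s s', 0 ≤ P s s')
    (hpi0 : ∀ s, 0 ≤ pidist s) (hP1 : ∀ s, ∑ s', P s s' = 1)
    (hstat : ∀ s', ∑ s, pidist s * P s s' = pidist s') (θ θ' : EuclideanSpace ℝ (Fin m)) :
    (1 - γ) * ∑ s, pidist s * ⟪φ s, θ' - θ⟫ ^ 2 ≤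
      ⟪θ' - θ, tdBar γ φ P pidist R θ - tdBar γ φ P pidist R θ'⟫ := by
  set x : S → ℝ := fun s => ⟪φ s, θ' - θ⟫
  have hcross := sum_sum_mul_mul_le_of_stationary P pidist hP0 hpi0 hP1 hstat x
  have hsplit : ∑ s, ∑ s', pidist s * P s s' * ((x s - γ * x s') * x s) =
      ∑ s, ∑ s', pidist s * P s s' * x s ^ 2
        - γ * ∑ s, ∑ s', pidist s * P s s' * (x s * x s') := by
    simp only [Finset.mul_sum, ← Finset.sum_sub_distrib]
    exact Finset.sum_congr rfl fun _ _ => Finset.sum_congr rfl fun _ _ => by ring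
  rw [inner_tdBar_sub_tdBar, hsplit, sum_sum_mul_eq_of_sum_eq_one P pidist hP1]
  nlinarith

end TemporalDifference

theorem stmt0_general
    {S : Type*} [Fintype S] {m : ℕ}
    (γ : ℝ) (hγ : γ ∈ Set.Ioo (0 : ℝ) 1)
    (φ : S → EuclideanSpace ℝ (Fin m))
    (P : S → S → ℝ) (hP0 : ∀ st st' : S, 0 ≤ P st st')
    (hP1 : ∀ st : S, ∑ st' : S, P st st' = 1)
    (pidist : S → ℝ) (hpi0 : ∀ st : S, 0 < pidist st)
    (hstat : ∀ st' : S, ∑ st : S, pidist st * P st st' = pidist st')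
    (R : S → ℝ)
    (ω : ℝ)
    (hωmin : ∀ θ : EuclideanSpace ℝ (Fin m), ω * ‖θ‖ ^ 2 ≤ ∑ st : S, pidist st * ⟪φ st, θ⟫ ^ 2)
    (θstar : EuclideanSpace ℝ (Fin m)) (hθstar : tdBar γ φ P pidist R θstar = 0)
    :
    ∀ θ : EuclideanSpace ℝ (Fin m),
      ω * (1 - γ) * ‖θstar - θ‖ ^ 2 ≤ ⟪θstar - θ, tdBar γ φ P pidist R θ⟫ := by
  intro θ
  have hmono := one_sub_mul_sum_sq_le_inner_tdBar_sub γ φ P pidist R hγ.1.le hP0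
    (fun s => (hpi0 s).le) hP1 hstat θ θstar
  rw [hθstar, sub_zero] at hmono
  calc ω * (1 - γ) * ‖θstar - θ‖ ^ 2 = (1 - γ) * (ω * ‖θstar - θ‖ ^ 2) := by ring
    _ ≤ (1 - γ) * ∑ s, pidist s * ⟪φ s, θstar - θ⟫ ^ 2 :=
        mul_le_mul_of_nonneg_left (hωmin _) (sub_nonneg.2 hγ.2.le)
    _ ≤ _ := hmono

/-- For every `θ`, `⟪θ* - θ, ḡ θ⟫ ≥ ω (1 - γ) ‖θ* - θ‖²`. -/
theorem stmt0
    {S : Type*} [Fintype S] [Nonempty S] {m : ℕ}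
    (γ : ℝ) (hγ : γ ∈ Set.Ioo (0 : ℝ) 1)
    (φ : S → EuclideanSpace ℝ (Fin m)) (hφ : ∀ st : S, ‖φ st‖ ≤ 1)
    (hrank : Function.Injective fun θ : EuclideanSpace ℝ (Fin m) => fun st : S => ⟪φ st, θ⟫)
    (P : S → S → ℝ) (hP0 : ∀ st st' : S, 0 ≤ P st st')
    (hP1 : ∀ st : S, ∑ st' : S, P st st' = 1)
    (pidist : S → ℝ) (hpi0 : ∀ st : S, 0 < pidist st) (hpi1 : ∑ st : S, pidist st = 1)
    (hstat : ∀ st' : S, ∑ st : S, pidist st * P st st' = pidist st')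
    (R : S → ℝ) (rbar : ℝ) (hrbar : 0 < rbar) (hR : ∀ st : S, |R st| ≤ rbar)
    (ω : ℝ) (hω : ω ∈ Set.Ioo (0 : ℝ) 1)
    (hωmin : ∀ θ : EuclideanSpace ℝ (Fin m), ω * ‖θ‖ ^ 2 ≤ ∑ st : S, pidist st * ⟪φ st, θ⟫ ^ 2)
    (θstar : EuclideanSpace ℝ (Fin m)) (hθstar : tdBar γ φ P pidist R θstar = 0)
    (σ : ℝ) (hσ : σ = max 1 (max rbar ‖θstar‖))
    :
    ∀ θ : EuclideanSpace ℝ (Fin m),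
      ω * (1 - γ) * ‖θstar - θ‖ ^ 2 ≤ ⟪θstar - θ, tdBar γ φ P pidist R θ⟫ :=
  stmt0_general γ hγ φ P hP0 hP1 pidist hpi0 hstat R ω hωmin θstar hθstar
end
end

section
/- The mean-path TD recursion converges exponentially fast to θ*: if 0 < α ≤ ω(1−γ)/4 and the deterministic sequence (θ_k) satisfies θ_{k+1} = θ_k + α·ḡ(θ_k), then for every k ≥ 0, ‖θ_{k+1} − θ*‖₂² ≤ (1 − αω(1−γ))·‖θ_k − θ*‖₂², and hence ‖θ_k − θ*‖₂² ≤ (1 − αω(1−γ))^k·‖θ_0 − θ*‖₂². -/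
/-!
The mean-path direction is affine: `ḡ(θ) = ḡ(θ*) + A (θ - θ*)`, where `A u` is `ḡ` with zero reward.
Since both marginals of `(s, s') ~ π ⊗ P` are `π`, AM-GM gives `E[x(s) x(s')] ≤ E[x(s)²]` for
`x = ⟪φ ·, u⟫`, so `⟪A u, u⟫ ≤ -(1 - γ) E[x(s)²] ≤ -ω (1 - γ) ‖u‖²`; moreover `‖A u‖ ≤ (1 + γ) ‖u‖`.
Expanding `‖u + α A u‖²` then yields the one-step contraction as soon as `α (1 + γ)² ≤ ω (1 - γ)`,
and iterating it gives the geometric rate.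
-/

open MeasureTheory ProbabilityTheory Finset
open scoped RealInnerProductSpace ProbabilityTheory

noncomputable section

section Marginals

variable {S : Type*} [Fintype S] {P : S → S → ℝ} {pidist : S → ℝ}

theorem sum_sum_transition_mul_fst (hP1 : ∀ st, ∑ st', P st st' = 1) (f : S → ℝ) :
    ∑ st, ∑ st', pidist st * P st st' * f st = ∑ st, pidist st * f st := by
  refine sum_congr rfl fun st _ => ?_
  rw [← sum_mul, ← mul_sum, hP1, mul_one]

theorem sum_sum_transition_mul_snd (hstat : ∀ st', ∑ st, pidist st * P st st' = pidist st')
    (f : S → ℝ) : ∑ st, ∑ st', pidist st * P st st' * f st' = ∑ st, pidist st * f st := by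
  rw [sum_comm]
  simp_rw [← sum_mul, hstat]

theorem sum_sum_transition_mul_le (hP0 : ∀ st st', 0 ≤ P st st') (hpi0 : ∀ st, 0 ≤ pidist st)
    (hP1 : ∀ st, ∑ st', P st st' = 1) (hstat : ∀ st', ∑ st, pidist st * P st st' = pidist st')
    (x : S → ℝ) :
    ∑ st, ∑ st', pidist st * P st st' * (x st * x st') ≤ ∑ st, pidist st * x st ^ 2 := by
  have hamgm : 2 * ∑ st, ∑ st', pidist st * P st st' * (x st * x st')
      ≤ ∑ st, ∑ st', pidist st * P st st' * x st ^ 2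
        + ∑ st, ∑ st', pidist st * P st st' * x st' ^ 2 := by
    simp_rw [mul_sum, ← sum_add_distrib]
    gcongr with st _ st' _
    nlinarith [mul_nonneg (hpi0 st) (hP0 st st'), two_mul_le_add_sq (x st) (x st')]
  rw [sum_sum_transition_mul_fst hP1, sum_sum_transition_mul_snd hstat] at hamgm
  linarith

end Marginals

section MeanPath

variable {S : Type*} {m : ℕ} {γ : ℝ} {φ : S → EuclideanSpace ℝ (Fin m)}

theorem tdDir_eq_add_tdDir_sub (θ θ' : EuclideanSpace ℝ (Fin m)) (st : S) (r : ℝ) (st' : S) :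
    tdDir γ φ θ (st, r, st') = tdDir γ φ θ' (st, r, st') + tdDir γ φ (θ - θ') (st, 0, st') := by
  simp only [tdDir, inner_sub_right, ← add_smul]
  congr 1
  ring

theorem norm_tdDir_zero_le (hγ : 0 ≤ γ) (hφ : ∀ st, ‖φ st‖ ≤ 1)
    (u : EuclideanSpace ℝ (Fin m)) (st st' : S) :
    ‖tdDir γ φ u (st, 0, st')‖ ≤ (1 + γ) * ‖u‖ := by
  have hinner : ∀ s, |⟪φ s, u⟫| ≤ ‖u‖ := fun s =>
    (abs_real_inner_le_norm _ _).trans (mul_le_of_le_one_left (norm_nonneg u) (hφ s))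
  rw [tdDir, norm_smul, Real.norm_eq_abs, zero_add]
  calc |γ * ⟪φ st', u⟫ - ⟪φ st, u⟫| * ‖φ st‖
      ≤ |γ * ⟪φ st', u⟫ - ⟪φ st, u⟫| := mul_le_of_le_one_right (abs_nonneg _) (hφ st)
    _ ≤ γ * |⟪φ st', u⟫| + |⟪φ st, u⟫| := by
        simpa [abs_mul, abs_of_nonneg hγ] using abs_sub (γ * ⟪φ st', u⟫) ⟪φ st, u⟫
    _ ≤ (1 + γ) * ‖u‖ := by nlinarith [hinner st, hinner st']

variable [Fintype S] {P : S → S → ℝ} {pidist : S → ℝ}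

theorem tdBar_eq_add_tdBar_sub (R : S → ℝ) (θ θ' : EuclideanSpace ℝ (Fin m)) :
    tdBar γ φ P pidist R θ = tdBar γ φ P pidist R θ' + tdBar γ φ P pidist 0 (θ - θ') := by
  simp only [tdBar, ← sum_add_distrib, ← smul_add, Pi.zero_apply]
  simp_rw [← tdDir_eq_add_tdDir_sub]

theorem norm_tdBar_zero_le (hγ : 0 ≤ γ) (hφ : ∀ st, ‖φ st‖ ≤ 1)
    (hP0 : ∀ st st', 0 ≤ P st st') (hP1 : ∀ st, ∑ st', P st st' = 1)
    (hpi0 : ∀ st, 0 ≤ pidist st) (hpi1 : ∑ st, pidist st = 1) (u : EuclideanSpace ℝ (Fin m)) :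
    ‖tdBar γ φ P pidist 0 u‖ ≤ (1 + γ) * ‖u‖ :=
  calc ‖tdBar γ φ P pidist 0 u‖
      ≤ ∑ st, ∑ st', ‖(pidist st * P st st') • tdDir γ φ u (st, 0, st')‖ :=
        (norm_sum_le _ _).trans (sum_le_sum fun st _ => norm_sum_le _ _)
    _ ≤ ∑ st, ∑ st', pidist st * P st st' * ((1 + γ) * ‖u‖) := by
        gcongr with st _ st' _
        rw [norm_smul, Real.norm_of_nonneg (mul_nonneg (hpi0 st) (hP0 st st'))]
        exact mul_le_mul_of_nonneg_left (norm_tdDir_zero_le hγ hφ u st st')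
          (mul_nonneg (hpi0 st) (hP0 st st'))
    _ = (1 + γ) * ‖u‖ := by
        rw [sum_sum_transition_mul_fst hP1, ← sum_mul, hpi1, one_mul]

theorem inner_tdBar_zero_self_le (hγ : 0 ≤ γ) (hP0 : ∀ st st', 0 ≤ P st st')
    (hP1 : ∀ st, ∑ st', P st st' = 1) (hpi0 : ∀ st, 0 ≤ pidist st)
    (hstat : ∀ st', ∑ st, pidist st * P st st' = pidist st') (u : EuclideanSpace ℝ (Fin m)) :
    ⟪tdBar γ φ P pidist 0 u, u⟫ ≤ -((1 - γ) * ∑ st, pidist st * ⟪φ st, u⟫ ^ 2) := by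
  set x : S → ℝ := fun st => ⟪φ st, u⟫
  have hexpand : ⟪tdBar γ φ P pidist 0 u, u⟫
      = γ * ∑ st, ∑ st', pidist st * P st st' * (x st * x st')
        - ∑ st, ∑ st', pidist st * P st st' * x st ^ 2 := by
    simp only [tdBar, tdDir, sum_inner, real_inner_smul_left, Pi.zero_apply, zero_add,
      mul_sum, ← sum_sub_distrib]
    refine sum_congr rfl fun st _ => sum_congr rfl fun st' _ => ?_
    simp only [x, real_inner_comm u (φ st')]
    ring
  rw [hexpand, sum_sum_transition_mul_fst hP1]
  nlinarith [mul_le_mul_of_nonneg_left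
    (sum_sum_transition_mul_le hP0 hpi0 hP1 hstat x) hγ]

end MeanPath

theorem norm_add_smul_sq_le {E : Type*} [NormedAddCommGroup E] [InnerProductSpace ℝ E]
    {u v : E} {α c L : ℝ} (hinner : ⟪v, u⟫ ≤ -(c * ‖u‖ ^ 2)) (hnorm : ‖v‖ ≤ L * ‖u‖)
    (hα : 0 ≤ α) (hαL : α * L ^ 2 ≤ c) :
    ‖u + α • v‖ ^ 2 ≤ (1 - α * c) * ‖u‖ ^ 2 := by
  have hsq : ‖v‖ ^ 2 ≤ L ^ 2 * ‖u‖ ^ 2 := mul_pow L ‖u‖ 2 ▸ pow_le_pow_left₀ (norm_nonneg v) hnorm 2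
  rw [norm_add_sq_real, real_inner_smul_right, norm_smul, Real.norm_of_nonneg hα, real_inner_comm]
  nlinarith [mul_le_mul_of_nonneg_left hinner hα, mul_le_mul_of_nonneg_left hsq (sq_nonneg α),
    mul_le_mul_of_nonneg_right (mul_le_mul_of_nonneg_left hαL hα) (sq_nonneg ‖u‖)]

theorem stmt3_general
    {S : Type*} [Fintype S] {m : ℕ}
    (γ : ℝ) (hγ : γ ∈ Set.Ioo (0 : ℝ) 1)
    (φ : S → EuclideanSpace ℝ (Fin m)) (hφ : ∀ st : S, ‖φ st‖ ≤ 1)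
    (P : S → S → ℝ) (hP0 : ∀ st st' : S, 0 ≤ P st st')
    (hP1 : ∀ st : S, ∑ st' : S, P st st' = 1)
    (pidist : S → ℝ) (hpi0 : ∀ st : S, 0 < pidist st) (hpi1 : ∑ st : S, pidist st = 1)
    (hstat : ∀ st' : S, ∑ st : S, pidist st * P st st' = pidist st')
    (R : S → ℝ)
    (ω : ℝ) (hω : ω ∈ Set.Ioo (0 : ℝ) 1)
    (hωmin : ∀ θ : EuclideanSpace ℝ (Fin m), ω * ‖θ‖ ^ 2 ≤ ∑ st : S, pidist st * ⟪φ st, θ⟫ ^ 2)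
    (θstar : EuclideanSpace ℝ (Fin m)) (hθstar : tdBar γ φ P pidist R θstar = 0)
    (α : ℝ) (hαpos : 0 < α) (hα : α ≤ ω * (1 - γ) / 4)
    (θseq : ℕ → EuclideanSpace ℝ (Fin m))
    (hrec : ∀ k : ℕ, θseq (k + 1) = θseq k + α • tdBar γ φ P pidist R (θseq k)) :
    (∀ k : ℕ, ‖θseq (k + 1) - θstar‖ ^ 2
        ≤ (1 - α * ω * (1 - γ)) * ‖θseq k - θstar‖ ^ 2) ∧
    (∀ k : ℕ, ‖θseq k - θstar‖ ^ 2
        ≤ (1 - α * ω * (1 - γ)) ^ k * ‖θseq 0 - θstar‖ ^ 2) := by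
  obtain ⟨hγ0, hγ1⟩ := hγ
  obtain ⟨hω0, hω1⟩ := hω
  have hpi_nonneg : ∀ st, 0 ≤ pidist st := fun st => (hpi0 st).le
  have hinner (u : EuclideanSpace ℝ (Fin m)) :
      ⟪tdBar γ φ P pidist 0 u, u⟫ ≤ -(ω * (1 - γ) * ‖u‖ ^ 2) := by
    have hcoercive := mul_le_mul_of_nonneg_left (hωmin u) (sub_nonneg.2 hγ1.le)
    linarith [inner_tdBar_zero_self_le hγ0.le hP0 hP1 hpi_nonneg hstat u (φ := φ)]
  have hstep (k : ℕ) : ‖θseq (k + 1) - θstar‖ ^ 2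
      ≤ (1 - α * ω * (1 - γ)) * ‖θseq k - θstar‖ ^ 2 := by
    have hsub : θseq (k + 1) - θstar
        = (θseq k - θstar) + α • tdBar γ φ P pidist 0 (θseq k - θstar) := by
      rw [hrec, tdBar_eq_add_tdBar_sub R (θseq k) θstar, hθstar, zero_add]
      abel
    rw [hsub, mul_assoc]
    refine norm_add_smul_sq_le (hinner _) (norm_tdBar_zero_le hγ0.le hφ hP0 hP1 hpi_nonneg hpi1 _)
      hαpos.le ?_
    calc α * (1 + γ) ^ 2 ≤ α * 4 := by gcongr; nlinarith
      _ ≤ ω * (1 - γ) := by linarith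
  have hrate : 0 ≤ 1 - α * ω * (1 - γ) := by
    have hc1 : ω * (1 - γ) ≤ 1 := mul_le_one₀ hω1.le (by linarith) (by linarith)
    nlinarith [mul_le_mul hα hc1 (mul_pos hω0 (sub_pos.2 hγ1)).le (by positivity)]
  exact ⟨hstep, fun k =>
    le_geom (u := fun k => ‖θseq k - θstar‖ ^ 2) hrate k fun j _ => hstep j⟩

/-- The mean-path TD recursion converges exponentially fast to `θ*`. -/
theorem stmt3
    {S : Type*} [Fintype S] [Nonempty S] {m : ℕ}
    (γ : ℝ) (hγ : γ ∈ Set.Ioo (0 : ℝ) 1)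
    (φ : S → EuclideanSpace ℝ (Fin m)) (hφ : ∀ st : S, ‖φ st‖ ≤ 1)
    (hrank : Function.Injective fun θ : EuclideanSpace ℝ (Fin m) => fun st : S => ⟪φ st, θ⟫)
    (P : S → S → ℝ) (hP0 : ∀ st st' : S, 0 ≤ P st st')
    (hP1 : ∀ st : S, ∑ st' : S, P st st' = 1)
    (pidist : S → ℝ) (hpi0 : ∀ st : S, 0 < pidist st) (hpi1 : ∑ st : S, pidist st = 1)
    (hstat : ∀ st' : S, ∑ st : S, pidist st * P st st' = pidist st')
    (R : S → ℝ) (rbar : ℝ) (hrbar : 0 < rbar) (hR : ∀ st : S, |R st| ≤ rbar)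
    (ω : ℝ) (hω : ω ∈ Set.Ioo (0 : ℝ) 1)
    (hωmin : ∀ θ : EuclideanSpace ℝ (Fin m), ω * ‖θ‖ ^ 2 ≤ ∑ st : S, pidist st * ⟪φ st, θ⟫ ^ 2)
    (θstar : EuclideanSpace ℝ (Fin m)) (hθstar : tdBar γ φ P pidist R θstar = 0)
    (σ : ℝ) (hσ : σ = max 1 (max rbar ‖θstar‖))
    (α : ℝ) (hαpos : 0 < α) (hα : α ≤ ω * (1 - γ) / 4)
    (θseq : ℕ → EuclideanSpace ℝ (Fin m))
    (hrec : ∀ k : ℕ, θseq (k + 1) = θseq k + α • tdBar γ φ P pidist R (θseq k)) :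
    (∀ k : ℕ, ‖θseq (k + 1) - θstar‖ ^ 2
        ≤ (1 - α * ω * (1 - γ)) * ‖θseq k - θstar‖ ^ 2) ∧
    (∀ k : ℕ, ‖θseq k - θstar‖ ^ 2
        ≤ (1 - α * ω * (1 - γ)) ^ k * ‖θseq 0 - θstar‖ ^ 2) :=
  stmt3_general γ hγ φ hφ P hP0 hP1 pidist hpi0 hpi1 hstat R ω hω hωmin θstar hθstar α hαpos hα θseq
    hrec
end
end

section
/- (Burn-in bound) If ατ ≤ 1/(1032ζ'), then the QFedTD iterate at time 2τ satisfies E[δ_{2τ}²] ≤ 2δ_0² + pσ². -/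
/-!
The TD direction grows at most linearly, `‖g(θ, o)‖ ≤ r̄ + 2‖θ‖`, so
`‖g_{i,k}(θ_k)‖² ≤ 8 δ_k² + 18 σ²`. Unbiased quantization with relative variance `ζ` inflates
second moments by at most `2(1 + ζ) ≤ 4ζ'`, and Bernoulli participation independent of the
quantized directions scales them by `p`; with Cauchy–Schwarz over the agents this gives
`E‖v_k‖² ≤ 4pζ'(8 E δ_k² + 18σ²)`. As `‖x + αy‖² ≤ (1 + α)‖x‖² + 2α‖y‖²`, the second moment
obeys `E δ_{k+1}² ≤ (1 + 65ζ'α) E δ_k² + 144 pζ'ασ²`, and over `2τ` steps the condition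
`ατ ≤ 1/(1032ζ')` keeps the growth factor below `2` and the accumulated noise below `pσ²`.
-/

open MeasureTheory ProbabilityTheory Finset
open scoped RealInnerProductSpace ProbabilityTheory

noncomputable section

section Norms

variable {E : Type*} [NormedAddCommGroup E] [NormedSpace ℝ E]

lemma sq_norm_add_smul_le (x y : E) {α : ℝ} (hα0 : 0 ≤ α) (hα1 : α ≤ 1) :
    ‖x + α • y‖ ^ 2 ≤ (1 + α) * ‖x‖ ^ 2 + 2 * α * ‖y‖ ^ 2 := by
  have h : ‖x + α • y‖ ≤ ‖x‖ + α * ‖y‖ := by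
    simpa only [norm_smul, Real.norm_eq_abs, abs_of_nonneg hα0] using norm_add_le x (α • y)
  calc ‖x + α • y‖ ^ 2 ≤ (‖x‖ + α * ‖y‖) ^ 2 := pow_le_pow_left₀ (norm_nonneg _) h 2
    _ ≤ (1 + α) * ‖x‖ ^ 2 + 2 * α * ‖y‖ ^ 2 := by
      nlinarith [mul_nonneg hα0 (sq_nonneg (‖x‖ - ‖y‖)),
        mul_nonneg (mul_nonneg hα0 (sub_nonneg.2 hα1)) (sq_nonneg ‖y‖)]

lemma sq_norm_avg_smul_le {ι : Type*} [Fintype ι] (b : ι → ℝ) (hb : ∀ i, b i ∈ Set.Icc 0 1)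
    (x : ι → E) :
    ‖(Fintype.card ι : ℝ)⁻¹ • ∑ i, b i • x i‖ ^ 2 ≤
      (Fintype.card ι : ℝ)⁻¹ * ∑ i, b i * ‖x i‖ ^ 2 := by
  have hterm : ∀ i, ‖b i • x i‖ ^ 2 ≤ b i * ‖x i‖ ^ 2 := fun i => by
    obtain ⟨hb0, hb1⟩ := hb i
    rw [norm_smul, mul_pow, Real.norm_eq_abs, sq_abs]
    exact mul_le_mul_of_nonneg_right (by nlinarith) (sq_nonneg _)
  calc ‖(Fintype.card ι : ℝ)⁻¹ • ∑ i, b i • x i‖ ^ 2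
      = (Fintype.card ι : ℝ)⁻¹ ^ 2 * ‖∑ i, b i • x i‖ ^ 2 := by
        rw [norm_smul, mul_pow, Real.norm_eq_abs, sq_abs]
    _ ≤ (Fintype.card ι : ℝ)⁻¹ ^ 2 * (Fintype.card ι * ∑ i, ‖b i • x i‖ ^ 2) := by
        gcongr
        calc ‖∑ i, b i • x i‖ ^ 2 ≤ (∑ i, ‖b i • x i‖) ^ 2 :=
              pow_le_pow_left₀ (norm_nonneg _) (norm_sum_le _ _) 2
          _ ≤ _ := by simpa using sq_sum_le_card_mul_sum_sq (s := univ) (f := fun i => ‖b i • x i‖)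
    _ ≤ (Fintype.card ι : ℝ)⁻¹ * ∑ i, b i * ‖x i‖ ^ 2 := by
        rcases Nat.eq_zero_or_pos (Fintype.card ι) with h0 | hpos
        · simp [h0]
        · rw [sq, mul_assoc, inv_mul_cancel_left₀ (Nat.cast_pos.2 hpos).ne']
          gcongr with i
          exact hterm i

end Norms

lemma le_pow_mul_add_of_le_mul_add {X : ℕ → ℝ} {A B : ℝ} (hA : 1 ≤ A) (hB : 0 ≤ B)
    (hX : ∀ k, X (k + 1) ≤ A * X k + B) (n : ℕ) : X n ≤ A ^ n * (X 0 + n * B) := by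
  induction n with
  | zero => simp
  | succ n ih =>
    have hAn : 1 ≤ A ^ (n + 1) := one_le_pow₀ hA
    calc X (n + 1) ≤ A * (A ^ n * (X 0 + n * B)) + B :=
          (hX n).trans (by gcongr)
      _ ≤ A ^ (n + 1) * (X 0 + n * B) + A ^ (n + 1) * B := by
          rw [← mul_assoc, ← pow_succ']; gcongr; exact le_mul_of_one_le_left hB hAn
      _ = A ^ (n + 1) * (X 0 + (n + 1 : ℕ) * B) := by push_cast; ring

lemma one_add_pow_le_two {ε : ℝ} (hε : 0 ≤ ε) {n : ℕ} (hn : n * ε ≤ 1 / 2) :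
    (1 + ε) ^ n ≤ 2 :=
  calc (1 + ε) ^ n ≤ Real.exp ε ^ n := by
        gcongr; linarith [Real.add_one_le_exp ε]
    _ = Real.exp (n * ε) := (Real.exp_nat_mul ε n).symm
    _ ≤ 1 / (1 - n * ε) := Real.exp_bound_div_one_sub_of_interval (by positivity) (by linarith)
    _ ≤ 2 := by rw [div_le_iff₀ (by linarith)]; linarith

lemma le_two_mul_add_of_le_one_add_mul_add {X : ℕ → ℝ} {ε B : ℝ} (hε : 0 ≤ ε) (hB : 0 ≤ B)
    (hX : ∀ k, X (k + 1) ≤ (1 + ε) * X k + B) (hX0 : 0 ≤ X 0) {n : ℕ} (hn : n * ε ≤ 1 / 2) :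
    X n ≤ 2 * X 0 + 2 * n * B := by
  have hpow := one_add_pow_le_two hε hn
  calc X n ≤ (1 + ε) ^ n * (X 0 + n * B) :=
        le_pow_mul_add_of_le_mul_add (by linarith) hB hX n
    _ ≤ 2 * (X 0 + n * B) := by gcongr
    _ = 2 * X 0 + 2 * n * B := by ring

section Moments

variable {Ω E : Type*} {m m₀ : MeasurableSpace Ω} {μ : Measure Ω} [NormedAddCommGroup E]

lemma MeasureTheory.MemLp.integrable_sq_norm {f : Ω → E} (hf : MemLp f 2 μ) :
    Integrable (fun x => ‖f x‖ ^ 2) μ :=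
  (memLp_two_iff_integrable_sq_norm hf.1).1 hf

lemma integral_sq_norm_le_of_condExp_sq_norm_sub_le [IsFiniteMeasure μ] (hm : m ≤ m₀)
    {f g : Ω → E} (hf : MemLp f 2 μ) (hg : MemLp g 2 μ) {ζ : ℝ}
    (hvar : ∀ᵐ x ∂μ, μ[fun y => ‖f y - g y‖ ^ 2 | m] x ≤ ζ * ‖g x‖ ^ 2) :
    ∫ x, ‖f x‖ ^ 2 ∂μ ≤ 2 * (1 + ζ) * ∫ x, ‖g x‖ ^ 2 ∂μ := by
  have hdev : ∫ x, ‖f x - g x‖ ^ 2 ∂μ ≤ ζ * ∫ x, ‖g x‖ ^ 2 ∂μ := by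
    rw [← integral_condExp hm, ← integral_const_mul]
    exact integral_mono_ae integrable_condExp (hg.integrable_sq_norm.const_mul ζ) hvar
  have hsplit : ∀ x, ‖f x‖ ^ 2 ≤ 2 * ‖f x - g x‖ ^ 2 + 2 * ‖g x‖ ^ 2 := fun x => by
    have := norm_le_norm_sub_add (f x) (g x)
    nlinarith [add_sq_le (a := ‖f x - g x‖) (b := ‖g x‖), norm_nonneg (f x)]
  have hfg : MemLp (fun x => f x - g x) 2 μ := hf.sub hg
  calc ∫ x, ‖f x‖ ^ 2 ∂μ ≤ ∫ x, (2 * ‖f x - g x‖ ^ 2 + 2 * ‖g x‖ ^ 2) ∂μ :=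
        integral_mono hf.integrable_sq_norm
          ((hfg.integrable_sq_norm.const_mul 2).add (hg.integrable_sq_norm.const_mul 2)) hsplit
    _ = 2 * ∫ x, ‖f x - g x‖ ^ 2 ∂μ + 2 * ∫ x, ‖g x‖ ^ 2 ∂μ := by
        rw [integral_add (hfg.integrable_sq_norm.const_mul 2) (hg.integrable_sq_norm.const_mul 2),
          integral_const_mul, integral_const_mul]
    _ ≤ 2 * (1 + ζ) * ∫ x, ‖g x‖ ^ 2 ∂μ := by linarith

lemma integral_eq_of_bernoulli {b : Ω → ℝ} (hb : Measurable b) (hb01 : ∀ x, b x = 0 ∨ b x = 1)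
    {p : ℝ} (hp : 0 ≤ p) (hbp : μ {x | b x = 1} = ENNReal.ofReal p) :
    ∫ x, b x ∂μ = p := by
  have hb_ind : b = Set.indicator {x | b x = 1} 1 := by
    funext x
    rcases hb01 x with h | h <;> simp [h]
  have hset : MeasurableSet {x | b x = 1} := hb (measurableSet_singleton 1)
  rw [hb_ind, integral_indicator_one hset, measureReal_def, hbp, ENNReal.toReal_ofReal hp]

lemma integral_sq_norm_avg_smul_le [IsProbabilityMeasure μ] [NormedSpace ℝ E]
    [MeasurableSpace E] [BorelSpace E] {ι : Type*} [Fintype ι] [Nonempty ι]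
    {b : ι → Ω → ℝ} {h : ι → Ω → E}
    (hb : ∀ i, Measurable (b i)) (hb01 : ∀ i x, b i x = 0 ∨ b i x = 1)
    {p : ℝ} (hp : 0 ≤ p) (hbp : ∀ i, μ {x | b i x = 1} = ENNReal.ofReal p)
    (hind : ∀ i, IndepFun (b i) (h i) μ) (hh : ∀ i, MemLp (h i) 2 μ)
    {M : ℝ} (hM : ∀ i, ∫ x, ‖h i x‖ ^ 2 ∂μ ≤ M) :
    ∫ x, ‖(Fintype.card ι : ℝ)⁻¹ • ∑ i, b i x • h i x‖ ^ 2 ∂μ ≤ p * M := by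
  have hb_Icc : ∀ i x, b i x ∈ Set.Icc (0 : ℝ) 1 := fun i x => by
    rcases hb01 i x with h | h <;> simp [h]
  have hbh_int : ∀ i, Integrable (fun x => b i x * ‖h i x‖ ^ 2) μ := fun i =>
    (hh i).integrable_sq_norm.bdd_mul (hb i).aestronglyMeasurable (c := 1)
      (.of_forall fun x => by rcases hb01 i x with hb | hb <;> simp [hb])
  have hbh : ∀ i, ∫ x, b i x * ‖h i x‖ ^ 2 ∂μ = p * ∫ x, ‖h i x‖ ^ 2 ∂μ := fun i => by
    have hind' : IndepFun (b i) (fun x => ‖h i x‖ ^ 2) μ :=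
      (hind i).comp measurable_id (measurable_norm.pow_const 2)
    rw [hind'.integral_fun_mul_eq_mul_integral (hb i).aestronglyMeasurable
      (hh i).integrable_sq_norm.1,
      integral_eq_of_bernoulli (hb i) (hb01 i) hp (hbp i)]
  calc ∫ x, ‖(Fintype.card ι : ℝ)⁻¹ • ∑ i, b i x • h i x‖ ^ 2 ∂μ
      ≤ ∫ x, (Fintype.card ι : ℝ)⁻¹ * ∑ i, b i x * ‖h i x‖ ^ 2 ∂μ :=
        integral_mono_of_nonneg (.of_forall fun _ => by positivity)
          ((integrable_finsetSum _ fun i _ => hbh_int i).const_mul _)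
          (.of_forall fun x => sq_norm_avg_smul_le (b · x) (hb_Icc · x) (h · x))
    _ = (Fintype.card ι : ℝ)⁻¹ * ∑ i, p * ∫ x, ‖h i x‖ ^ 2 ∂μ := by
        rw [integral_const_mul, integral_finsetSum _ fun i _ => hbh_int i]
        simp only [hbh]
    _ ≤ (Fintype.card ι : ℝ)⁻¹ * ∑ _i : ι, p * M := by gcongr with i; exact hM i
    _ = p * M := by
        rw [sum_const, card_univ, nsmul_eq_mul, inv_mul_cancel_left₀ (by positivity)]

lemma memLp_smul_sum_smul [NormedSpace ℝ E] {ι : Type*} [Fintype ι] {b : ι → Ω → ℝ} {h : ι → Ω → E}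
    {p : ENNReal} (hb : ∀ i, Measurable (b i)) (hb1 : ∀ i x, |b i x| ≤ 1)
    (hh : ∀ i, MemLp (h i) p μ) (c : ℝ) :
    MemLp (fun x => c • ∑ i, b i x • h i x) p μ := by
  have hterm : ∀ i, MemLp (fun x => b i x • h i x) p μ := fun i =>
    (hh i).of_le ((hb i).aestronglyMeasurable.smul (hh i).1) (.of_forall fun x => by
      rw [norm_smul, Real.norm_eq_abs]; exact mul_le_of_le_one_left (norm_nonneg _) (hb1 i x))
  exact (memLp_finsetSum univ fun i _ => hterm i).const_smul c

lemma integral_sq_norm_add_smul_sub_le [IsFiniteMeasure μ] [NormedSpace ℝ E] {θ v : Ω → E}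
    (hθ : MemLp θ 2 μ) (hv : MemLp v 2 μ) (c : E) {α : ℝ} (hα0 : 0 ≤ α) (hα1 : α ≤ 1) :
    ∫ x, ‖θ x + α • v x - c‖ ^ 2 ∂μ ≤
      (1 + α) * ∫ x, ‖θ x - c‖ ^ 2 ∂μ + 2 * α * ∫ x, ‖v x‖ ^ 2 ∂μ := by
  have hθc : MemLp (fun x => θ x - c) 2 μ := hθ.sub (memLp_const c)
  calc ∫ x, ‖θ x + α • v x - c‖ ^ 2 ∂μ
      ≤ ∫ x, ((1 + α) * ‖θ x - c‖ ^ 2 + 2 * α * ‖v x‖ ^ 2) ∂μ :=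
        integral_mono_of_nonneg (.of_forall fun _ => by positivity)
          ((hθc.integrable_sq_norm.const_mul _).add (hv.integrable_sq_norm.const_mul _))
          (.of_forall fun x => by
            simpa only [add_sub_right_comm] using sq_norm_add_smul_le (θ x - c) (v x) hα0 hα1)
    _ = (1 + α) * ∫ x, ‖θ x - c‖ ^ 2 ∂μ + 2 * α * ∫ x, ‖v x‖ ^ 2 ∂μ := by
        rw [integral_add (hθc.integrable_sq_norm.const_mul _) (hv.integrable_sq_norm.const_mul _),
          integral_const_mul, integral_const_mul]

end Moments

section Iterates

variable {Ω E : Type*} {m₀ : MeasurableSpace Ω} {μ : Measure Ω}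
  [NormedAddCommGroup E] [NormedSpace ℝ E] {θ v : ℕ → Ω → E} {α : ℝ}

lemma memLp_iterate {q : ENNReal} (h0 : MemLp (θ 0) q μ) (hv : ∀ k, MemLp (v k) q μ)
    (hrec : ∀ k x, θ (k + 1) x = θ k x + α • v k x) (k : ℕ) : MemLp (θ k) q μ := by
  induction k with
  | zero => exact h0
  | succ k ih => rw [funext (hrec k)]; exact ih.add ((hv k).const_smul α)

lemma integral_sq_norm_iterate_sub_le [IsFiniteMeasure μ] (h0 : MemLp (θ 0) 2 μ)
    (hv : ∀ k, MemLp (v k) 2 μ) (hrec : ∀ k x, θ (k + 1) x = θ k x + α • v k x)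
    (c : E) {p ζ' σ : ℝ} {τ : ℕ} (hα0 : 0 ≤ α) (hα1 : α ≤ 1) (hp0 : 0 ≤ p) (hp1 : p ≤ 1)
    (hζ' : 1 ≤ ζ') (hατ : ζ' * α * τ ≤ 1 / 1032)
    (hmom : ∀ k, ∫ x, ‖v k x‖ ^ 2 ∂μ ≤
      p * (4 * ζ' * (8 * ∫ x, ‖θ k x - c‖ ^ 2 ∂μ + 18 * σ ^ 2))) :
    ∫ x, ‖θ (2 * τ) x - c‖ ^ 2 ∂μ ≤ 2 * ∫ x, ‖θ 0 x - c‖ ^ 2 ∂μ + p * σ ^ 2 := by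
  have hstep : ∀ k, ∫ x, ‖θ (k + 1) x - c‖ ^ 2 ∂μ ≤
      (1 + 65 * ζ' * α) * ∫ x, ‖θ k x - c‖ ^ 2 ∂μ + 144 * p * ζ' * α * σ ^ 2 := fun k => by
    have hX := integral_sq_norm_add_smul_sub_le (memLp_iterate h0 hv hrec k) (hv k) c hα0 hα1
    simp only [← hrec] at hX
    have hαX : 0 ≤ α * ∫ x, ‖θ k x - c‖ ^ 2 ∂μ :=
      mul_nonneg hα0 (integral_nonneg fun _ => by positivity)
    -- `1 + α + 64 p ζ' α ≤ 1 + 65 ζ' α` as `p ≤ 1 ≤ ζ'`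
    linarith [mul_le_mul_of_nonneg_left (hmom k) hα0,
      mul_nonneg (mul_nonneg hαX (by linarith : (0 : ℝ) ≤ ζ')) (sub_nonneg.2 hp1),
      mul_nonneg hαX (sub_nonneg.2 hζ')]
  have hburn := le_two_mul_add_of_le_one_add_mul_add
    (X := fun k => ∫ x, ‖θ k x - c‖ ^ 2 ∂μ) (n := 2 * τ) (by positivity) (by positivity) hstep
    (integral_nonneg fun _ => by positivity) (by push_cast; linarith)
  refine hburn.trans ?_
  push_cast
  have hpσ : 0 ≤ p * σ ^ 2 := by positivity
  linarith [mul_le_mul_of_nonneg_left hατ hpσ]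

end Iterates

section TDDirection

variable {S : Type*} {m : ℕ} {γ : ℝ} {φ : S → EuclideanSpace ℝ (Fin m)}

lemma norm_tdDir_le (hγ : |γ| ≤ 1) (hφ : ∀ st, ‖φ st‖ ≤ 1) (θ : EuclideanSpace ℝ (Fin m))
    (o : S × ℝ × S) :
    ‖tdDir γ φ θ o‖ ≤ |o.2.1| + 2 * ‖θ‖ := by
  have hinner : ∀ st, |⟪φ st, θ⟫| ≤ ‖θ‖ := fun st =>
    (abs_real_inner_le_norm _ _).trans (mul_le_of_le_one_left (norm_nonneg _) (hφ st))
  calc ‖tdDir γ φ θ o‖ ≤ |o.2.1 + γ * ⟪φ o.2.2, θ⟫ - ⟪φ o.1, θ⟫| := by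
        rw [tdDir, norm_smul, Real.norm_eq_abs]
        exact mul_le_of_le_one_right (abs_nonneg _) (hφ _)
    _ ≤ |o.2.1| + |γ| * |⟪φ o.2.2, θ⟫| + |⟪φ o.1, θ⟫| := by
        rw [← abs_mul]; exact (abs_sub _ _).trans (add_le_add_left (abs_add_le _ _) _)
    _ ≤ |o.2.1| + 2 * ‖θ‖ := by
        nlinarith [hinner o.2.2, hinner o.1, abs_nonneg γ, abs_nonneg ⟪φ o.2.2, θ⟫]

lemma sq_norm_tdDir_le (hγ : |γ| ≤ 1) (hφ : ∀ st, ‖φ st‖ ≤ 1)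
    {θ c : EuclideanSpace ℝ (Fin m)} {o : S × ℝ × S} {σ : ℝ} (hr : |o.2.1| ≤ σ) (hc : ‖c‖ ≤ σ) :
    ‖tdDir γ φ θ o‖ ^ 2 ≤ 8 * ‖θ - c‖ ^ 2 + 18 * σ ^ 2 := by
  have hθ : ‖θ‖ ≤ ‖θ - c‖ + σ := by linarith [norm_sub_norm_le θ c]
  have hbound : ‖tdDir γ φ θ o‖ ≤ 2 * ‖θ - c‖ + 3 * σ := by
    linarith [norm_tdDir_le hγ hφ θ o]
  calc ‖tdDir γ φ θ o‖ ^ 2 ≤ (2 * ‖θ - c‖ + 3 * σ) ^ 2 :=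
        pow_le_pow_left₀ (norm_nonneg _) hbound 2
    _ ≤ 8 * ‖θ - c‖ ^ 2 + 18 * σ ^ 2 := by nlinarith [add_sq_le (a := 2 * ‖θ - c‖) (b := 3 * σ)]

variable {Ω : Type*} {m₀ : MeasurableSpace Ω} {μ : Measure Ω}
  {θ : Ω → EuclideanSpace ℝ (Fin m)} {o : Ω → S × ℝ × S} {σ : ℝ}

lemma memLp_two_tdDir [IsFiniteMeasure μ] (hγ : |γ| ≤ 1) (hφ : ∀ st, ‖φ st‖ ≤ 1)
    (hθ : MemLp θ 2 μ) (hmeas : AEStronglyMeasurable (fun x => tdDir γ φ (θ x) (o x)) μ)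
    (hr : ∀ x, |(o x).2.1| ≤ σ) :
    MemLp (fun x => tdDir γ φ (θ x) (o x)) 2 μ :=
  ((memLp_const σ).add (hθ.norm.const_mul 2)).of_le hmeas (.of_forall fun x => by
    have := norm_tdDir_le hγ hφ (θ x) (o x)
    simp only [Pi.add_apply]
    rw [Real.norm_of_nonneg (by linarith [hr x, abs_nonneg (o x).2.1, norm_nonneg (θ x)])]
    linarith [hr x])

lemma integral_sq_norm_tdDir_le [IsProbabilityMeasure μ] (hγ : |γ| ≤ 1)
    (hφ : ∀ st, ‖φ st‖ ≤ 1) (hθ : MemLp θ 2 μ) (hr : ∀ x, |(o x).2.1| ≤ σ)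
    {c : EuclideanSpace ℝ (Fin m)} (hc : ‖c‖ ≤ σ) :
    ∫ x, ‖tdDir γ φ (θ x) (o x)‖ ^ 2 ∂μ ≤ 8 * ∫ x, ‖θ x - c‖ ^ 2 ∂μ + 18 * σ ^ 2 := by
  have hθc : Integrable (fun x => ‖θ x - c‖ ^ 2) μ :=
    (hθ.sub (memLp_const c)).integrable_sq_norm
  calc ∫ x, ‖tdDir γ φ (θ x) (o x)‖ ^ 2 ∂μ
      ≤ ∫ x, (8 * ‖θ x - c‖ ^ 2 + 18 * σ ^ 2) ∂μ :=
        integral_mono_of_nonneg (.of_forall fun _ => by positivity)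
          ((hθc.const_mul 8).add (integrable_const _))
          (.of_forall fun x => sq_norm_tdDir_le hγ hφ (hr x) hc)
    _ = 8 * ∫ x, ‖θ x - c‖ ^ 2 ∂μ + 18 * σ ^ 2 := by
        rw [integral_add (hθc.const_mul 8) (integrable_const _), integral_const_mul,
          integral_const, probReal_univ, one_smul]

end TDDirection

theorem stmt10_general
    (S : Type*) [MeasurableSpace S] (m N : ℕ) (hN : 0 < N)
    (Ω : Type*) [MeasureSpace Ω] [IsProbabilityMeasure (ℙ : Measure Ω)]
    (γ : ℝ) (hγ : γ ∈ Set.Ioo (0 : ℝ) 1)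
    (φ : S → EuclideanSpace ℝ (Fin m)) (hφ : ∀ st : S, ‖φ st‖ ≤ 1)
    (R : S → ℝ) (rbar : ℝ) (hR : ∀ st : S, |R st| ≤ rbar)
    (θstar : EuclideanSpace ℝ (Fin m))
    (σ : ℝ) (hσ : σ = max 1 (max rbar ‖θstar‖))
    (p : ℝ) (hp : p ∈ Set.Ioc (0 : ℝ) 1)
    (ζ : ℝ) (ζ' : ℝ) (hζ' : ζ' = max 1 ζ)
    (α : ℝ) (hα : α ∈ Set.Ioo (0 : ℝ) 1)
    (τ : ℕ)
    (s : Fin N → ℕ → Ω → S) (hs_meas : ∀ i k, Measurable (s i k))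
    (b : Fin N → ℕ → Ω → ℝ) (hb_meas : ∀ i k, Measurable (b i k))
    (h : Fin N → ℕ → Ω → EuclideanSpace ℝ (Fin m)) (hh_meas : ∀ i k, Measurable (h i k))
    (hh_int : ∀ i k, Integrable (fun x => ‖h i k x‖ ^ 2))
    (o : Fin N → ℕ → Ω → S × ℝ × S)
    (ho : ∀ i k x, o i k x = (s i k x, R (s i k x), s i (k + 1) x))
    (g : Fin N → ℕ → EuclideanSpace ℝ (Fin m) → Ω → EuclideanSpace ℝ (Fin m))
    (hg : ∀ i k θ' x, g i k θ' x = tdDir γ φ θ' (o i k x))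
    (v : ℕ → Ω → EuclideanSpace ℝ (Fin m))
    (hv : ∀ k x, v k x = (N : ℝ)⁻¹ • ∑ i : Fin N, b i k x • h i k x)
    (θ : ℕ → Ω → EuclideanSpace ℝ (Fin m)) (θ0 : EuclideanSpace ℝ (Fin m))
    (hθ0 : ∀ x, θ 0 x = θ0)
    (hθrec : ∀ k x, θ (k + 1) x = θ k x + α • v k x)
    (hb01 : ∀ i k x, b i k x = 0 ∨ b i k x = 1)
    (hbp : ∀ i k, (ℙ : Measure Ω) {x | b i k x = 1} = ENNReal.ofReal p)
    (hb_indep : ∀ (i : Fin N) (k : ℕ), ProbabilityTheory.Indep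
      (MeasurableSpace.comap (b i k) inferInstance)
      ((⨆ (j : Fin N) (l : ℕ), MeasurableSpace.comap (s j l) inferInstance) ⊔
        (⨆ (jl : Fin N × ℕ) (_ : jl ≠ (i, k)),
          MeasurableSpace.comap (b jl.1 jl.2) inferInstance) ⊔
        (⨆ (j : Fin N) (l : ℕ) (_ : l ≤ k), MeasurableSpace.comap (h j l) inferInstance)) ℙ)
    (hQmean : ∀ (i : Fin N) (k : ℕ),
      (𝔼[h i k |
          (⨆ (j : Fin N) (l : ℕ), MeasurableSpace.comap (s j l) inferInstance) ⊔
          (⨆ (j : Fin N) (l : ℕ), MeasurableSpace.comap (b j l) inferInstance) ⊔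
          (⨆ (j : Fin N) (l : ℕ) (_ : l < k), MeasurableSpace.comap (h j l) inferInstance) ⊔
          (⨆ (j : Fin N) (_ : j ≠ i), MeasurableSpace.comap (h j k) inferInstance)])
        =ᵐ[ℙ] fun x => g i k (θ k x) x)
    (hQvar : ∀ (i : Fin N) (k : ℕ),
      ∀ᵐ x ∂(ℙ : Measure Ω),
        (𝔼[(fun y => ‖h i k y - g i k (θ k y) y‖ ^ 2) |
            (⨆ (j : Fin N) (l : ℕ), MeasurableSpace.comap (s j l) inferInstance) ⊔
            (⨆ (j : Fin N) (l : ℕ), MeasurableSpace.comap (b j l) inferInstance) ⊔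
            (⨆ (j : Fin N) (l : ℕ) (_ : l < k), MeasurableSpace.comap (h j l) inferInstance) ⊔
            (⨆ (j : Fin N) (_ : j ≠ i), MeasurableSpace.comap (h j k) inferInstance)]) x
          ≤ ζ * ‖g i k (θ k x) x‖ ^ 2)
    (hα10 : α * (τ : ℝ) ≤ 1 / (1032 * ζ')) :
    𝔼[fun x => ‖θ (2 * τ) x - θstar‖ ^ 2] ≤ 2 * ‖θ0 - θstar‖ ^ 2 + p * σ ^ 2 := by
  obtain ⟨hγ0, hγ1⟩ := hγ
  obtain ⟨hα0, hα1⟩ := hα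
  obtain ⟨hp0, hp1⟩ := hp
  have hσ_rbar : rbar ≤ σ := hσ ▸ (le_max_left _ _).trans (le_max_right _ _)
  have hσ_θstar : ‖θstar‖ ≤ σ := hσ ▸ (le_max_right _ _).trans (le_max_right _ _)
  have hζ'_one : 1 ≤ ζ' := hζ' ▸ le_max_left _ _
  have hζ_le : ζ ≤ ζ' := hζ' ▸ le_max_right _ _
  have hγ_abs : |γ| ≤ 1 := abs_le.2 ⟨by linarith, hγ1.le⟩
  have hreward : ∀ i k x, |(o i k x).2.1| ≤ σ := fun i k x => by
    rw [ho]; exact (hR _).trans hσ_rbar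
  have hh_L2 : ∀ i k, MemLp (h i k) 2 ℙ := fun i k =>
    (memLp_two_iff_integrable_sq_norm (hh_meas i k).aestronglyMeasurable).2 (hh_int i k)
  have hv_L2 : ∀ k, MemLp (v k) 2 ℙ := fun k => by
    rw [show v k = _ from funext (hv k)]
    exact memLp_smul_sum_smul (hb_meas · k)
      (fun i x => by rcases hb01 i k x with hb | hb <;> simp [hb]) (hh_L2 · k) _
  have hθ_L2 : ∀ k, MemLp (θ k) 2 ℙ :=
    memLp_iterate (by rw [funext hθ0]; exact memLp_const θ0) hv_L2 hθrec
  have hG_L2 : ∀ i k, MemLp (fun x => g i k (θ k x) x) 2 ℙ := fun i k => by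
    -- `φ` need not be measurable: measurability comes from `hQmean` instead
    have hmeas := integrable_condExp.aestronglyMeasurable.congr (hQmean i k)
    simp only [hg] at hmeas ⊢
    exact memLp_two_tdDir hγ_abs hφ (hθ_L2 k) hmeas (hreward i k)
  have hh_mom : ∀ i k, ∫ x, ‖h i k x‖ ^ 2 ≤
      4 * ζ' * (8 * (∫ x, ‖θ k x - θstar‖ ^ 2) + 18 * σ ^ 2) := fun i k => by
    calc ∫ x, ‖h i k x‖ ^ 2 ≤ 2 * (1 + ζ) * ∫ x, ‖g i k (θ k x) x‖ ^ 2 :=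
          integral_sq_norm_le_of_condExp_sq_norm_sub_le (by
            simp only [sup_le_iff, iSup_le_iff]
            exact ⟨⟨⟨fun j l => (hs_meas j l).comap_le, fun j l => (hb_meas j l).comap_le⟩,
              fun j l _ => (hh_meas j l).comap_le⟩, fun j _ => (hh_meas j k).comap_le⟩)
            (hh_L2 i k) (hG_L2 i k) (hQvar i k)
      _ = 2 * (1 + ζ) * ∫ x, ‖tdDir γ φ (θ k x) (o i k x)‖ ^ 2 := by simp only [hg]
      _ ≤ 4 * ζ' * (8 * (∫ x, ‖θ k x - θstar‖ ^ 2) + 18 * σ ^ 2) :=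
          mul_le_mul (by linarith)
            (integral_sq_norm_tdDir_le hγ_abs hφ (hθ_L2 k) (hreward i k) hσ_θstar)
            (integral_nonneg fun _ => by positivity) (by linarith)
  have hv_mom : ∀ k, ∫ x, ‖v k x‖ ^ 2 ≤
      p * (4 * ζ' * (8 * (∫ x, ‖θ k x - θstar‖ ^ 2) + 18 * σ ^ 2)) := fun k => by
    have : Nonempty (Fin N) := ⟨⟨0, hN⟩⟩
    have hind : ∀ i, IndepFun (b i k) (h i k) ℙ := fun i =>
      (IndepFun_iff_Indep _ _ _).2 (indep_of_indep_of_le_right (hb_indep i k)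
        (le_sup_of_le_right (le_iSup₂_of_le i k (le_iSup_of_le le_rfl le_rfl))))
    simpa only [hv, Fintype.card_fin] using integral_sq_norm_avg_smul_le (hb_meas · k)
      (hb01 · k) hp0.le (hbp · k) hind (hh_L2 · k) (hh_mom · k)
  have hατ : ζ' * α * τ ≤ 1 / 1032 := by
    rw [le_div_iff₀ (by positivity), mul_comm] at hα10; linarith
  simpa only [hθ0, integral_const, probReal_univ, one_smul] using
    integral_sq_norm_iterate_sub_le (hθ_L2 0) hv_L2 hθrec θstar hα0.le hα1.le hp0.le hp1
      hζ'_one hατ hv_mom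

/-- **Burn-in bound.** -/
theorem stmt10
    (S : Type*) [Fintype S] [Nonempty S] [MeasurableSpace S] (m N : ℕ) (hN : 0 < N)
    (Ω : Type*) [MeasureSpace Ω] [IsProbabilityMeasure (ℙ : Measure Ω)]
    (γ : ℝ) (hγ : γ ∈ Set.Ioo (0 : ℝ) 1)
    (φ : S → EuclideanSpace ℝ (Fin m)) (hφ : ∀ st : S, ‖φ st‖ ≤ 1)
    (hrank : Function.Injective fun θ' : EuclideanSpace ℝ (Fin m) => fun st : S => ⟪φ st, θ'⟫)
    (P : S → S → ℝ) (hP0 : ∀ st st' : S, 0 ≤ P st st')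
    (hP1 : ∀ st : S, ∑ st' : S, P st st' = 1)
    (pidist : S → ℝ) (hpi0 : ∀ st : S, 0 < pidist st) (hpi1 : ∑ st : S, pidist st = 1)
    (hstat : ∀ st' : S, ∑ st : S, pidist st * P st st' = pidist st')
    (R : S → ℝ) (rbar : ℝ) (hrbar : 0 < rbar) (hR : ∀ st : S, |R st| ≤ rbar)
    (ω : ℝ) (hω : ω ∈ Set.Ioo (0 : ℝ) 1)
    (hωmin : ∀ θ' : EuclideanSpace ℝ (Fin m), ω * ‖θ'‖ ^ 2 ≤ ∑ st : S, pidist st * ⟪φ st, θ'⟫ ^ 2)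
    (θstar : EuclideanSpace ℝ (Fin m)) (hθstar : tdBar γ φ P pidist R θstar = 0)
    (σ : ℝ) (hσ : σ = max 1 (max rbar ‖θstar‖))
    (p : ℝ) (hp : p ∈ Set.Ioc (0 : ℝ) 1)
    (ζ : ℝ) (hζ : 0 ≤ ζ) (ζ' : ℝ) (hζ' : ζ' = max 1 ζ)
    (α : ℝ) (hα : α ∈ Set.Ioo (0 : ℝ) 1)
    (q : ℕ) (hq : 2 ≤ q) (τ : ℕ) (hτ : 1 ≤ τ)
    (s : Fin N → ℕ → Ω → S) (hs_meas : ∀ i k, Measurable (s i k))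
    (b : Fin N → ℕ → Ω → ℝ) (hb_meas : ∀ i k, Measurable (b i k))
    (h : Fin N → ℕ → Ω → EuclideanSpace ℝ (Fin m)) (hh_meas : ∀ i k, Measurable (h i k))
    (hh_int : ∀ i k, Integrable (fun x => ‖h i k x‖ ^ 2))
    (o : Fin N → ℕ → Ω → S × ℝ × S)
    (ho : ∀ i k x, o i k x = (s i k x, R (s i k x), s i (k + 1) x))
    (g : Fin N → ℕ → EuclideanSpace ℝ (Fin m) → Ω → EuclideanSpace ℝ (Fin m))
    (hg : ∀ i k θ' x, g i k θ' x = tdDir γ φ θ' (o i k x))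
    (v : ℕ → Ω → EuclideanSpace ℝ (Fin m))
    (hv : ∀ k x, v k x = (N : ℝ)⁻¹ • ∑ i : Fin N, b i k x • h i k x)
    (θ : ℕ → Ω → EuclideanSpace ℝ (Fin m)) (θ0 : EuclideanSpace ℝ (Fin m))
    (hθ0 : ∀ x, θ 0 x = θ0)
    (hθrec : ∀ k x, θ (k + 1) x = θ k x + α • v k x)
    (hmarkov : ∀ (i : Fin N) (k : ℕ) (f : S → ℝ),
      (𝔼[(fun x => f (s i (k + 1) x)) |
          ⨆ (j : ℕ) (_ : j ≤ k), MeasurableSpace.comap (s i j) inferInstance])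
        =ᵐ[ℙ] fun x => ∑ st' : S, P (s i k x) st' * f st')
    (hchains_indep : ProbabilityTheory.iIndep
      (fun i : Fin N => ⨆ k : ℕ, MeasurableSpace.comap (s i k) inferInstance) ℙ)
    (hb01 : ∀ i k x, b i k x = 0 ∨ b i k x = 1)
    (hbp : ∀ i k, (ℙ : Measure Ω) {x | b i k x = 1} = ENNReal.ofReal p)
    (hb_indep : ∀ (i : Fin N) (k : ℕ), ProbabilityTheory.Indep
      (MeasurableSpace.comap (b i k) inferInstance)
      ((⨆ (j : Fin N) (l : ℕ), MeasurableSpace.comap (s j l) inferInstance) ⊔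
        (⨆ (jl : Fin N × ℕ) (_ : jl ≠ (i, k)),
          MeasurableSpace.comap (b jl.1 jl.2) inferInstance) ⊔
        (⨆ (j : Fin N) (l : ℕ) (_ : l ≤ k), MeasurableSpace.comap (h j l) inferInstance)) ℙ)
    (hQmean : ∀ (i : Fin N) (k : ℕ),
      (𝔼[h i k |
          (⨆ (j : Fin N) (l : ℕ), MeasurableSpace.comap (s j l) inferInstance) ⊔
          (⨆ (j : Fin N) (l : ℕ), MeasurableSpace.comap (b j l) inferInstance) ⊔
          (⨆ (j : Fin N) (l : ℕ) (_ : l < k), MeasurableSpace.comap (h j l) inferInstance) ⊔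
          (⨆ (j : Fin N) (_ : j ≠ i), MeasurableSpace.comap (h j k) inferInstance)])
        =ᵐ[ℙ] fun x => g i k (θ k x) x)
    (hQvar : ∀ (i : Fin N) (k : ℕ),
      ∀ᵐ x ∂(ℙ : Measure Ω),
        (𝔼[(fun y => ‖h i k y - g i k (θ k y) y‖ ^ 2) |
            (⨆ (j : Fin N) (l : ℕ), MeasurableSpace.comap (s j l) inferInstance) ⊔
            (⨆ (j : Fin N) (l : ℕ), MeasurableSpace.comap (b j l) inferInstance) ⊔
            (⨆ (j : Fin N) (l : ℕ) (_ : l < k), MeasurableSpace.comap (h j l) inferInstance) ⊔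
            (⨆ (j : Fin N) (_ : j ≠ i), MeasurableSpace.comap (h j k) inferInstance)]) x
          ≤ ζ * ‖g i k (θ k x) x‖ ^ 2)
    (hmix : ∀ (θ' : EuclideanSpace ℝ (Fin m)) (i : Fin N) (k : ℕ), τ ≤ k →
      ∀ᵐ x ∂(ℙ : Measure Ω),
        ‖(𝔼[g i k θ' | MeasurableSpace.comap (o i (k - τ)) inferInstance]) x
          - tdBar γ φ P pidist R θ'‖ ≤ α ^ q * (‖θ'‖ + 1))
    (hα10 : α * (τ : ℝ) ≤ 1 / (1032 * ζ')) :
    𝔼[fun x => ‖θ (2 * τ) x - θstar‖ ^ 2] ≤ 2 * ‖θ0 - θstar‖ ^ 2 + p * σ ^ 2 :=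
  stmt10_general S m N hN Ω γ hγ φ hφ R rbar hR θstar σ hσ p hp ζ ζ' hζ' α hα τ s hs_meas b hb_meas
    h hh_meas hh_int o ho g hg v hv θ θ0 hθ0 hθrec hb01 hbp hb_indep hQmean hQvar hα10
end
end
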